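/- arXiv:2412.14068 — 5 statements merged into one kernel-verified Lean document; each statement's English description precedes it below -/
import Mathlib

section
/- Let S be a semigroupoid, (α,X) a partial action of S, and ≈ the equivalence relation on the set D from the universal globalization construction. If s,t,p ∈ S with (s,x) ≈ (t,y) and (p,s), (p,t) ∈ S⁽²⁾, then (ps,x) ≈ (pt,y). -/
universe u v w

/-- An (Exel) semigroupoid: a set `S` with a set of composable pairs (encoded by
the relation `comp`) and a multiplication, associative in Exel's sense. -/
structure Semigroupoid (S : Type u) where
  comp : S → S → Prop
  mul : S → S → S
  assoc : ∀ s t r : S,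
    ((comp s t ∧ comp t r) ∨ (comp s t ∧ comp (mul s t) r) ∨ (comp t r ∧ comp s (mul t r))) →
      comp s t ∧ comp t r ∧ comp (mul s t) r ∧ comp s (mul t r) ∧
        mul (mul s t) r = mul s (mul t r)

namespace Semigroupoid

variable {S : Type u} {X : Type v}

/-- `S^s = {t | (s,t) ∈ S⁽²⁾}`. -/
def rightComp (G : Semigroupoid S) (s : S) : Set S := {t | G.comp s t}

/-- `X_s = α_s(ₛX)`. -/
def img (dom : S → Set X) (act : S → X → X) (s : S) : Set X := act s '' dom s

/-- Condition (P1): `α_t⁻¹(ₛX ∩ X_t) = ₜX ∩ ₛₜX` for composable `(s,t)`. -/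
def P1 (G : Semigroupoid S) (dom : S → Set X) (act : S → X → X) : Prop :=
  ∀ s t : S, G.comp s t →
    {x | x ∈ dom t ∧ act t x ∈ dom s ∩ img dom act t} = dom t ∩ dom (G.mul s t)

/-- Condition (P2): `α_s ∘ α_t = α_{st}` on `ₜX ∩ ₛₜX` for composable `(s,t)`. -/
def P2 (G : Semigroupoid S) (dom : S → Set X) (act : S → X → X) : Prop :=
  ∀ s t : S, G.comp s t → ∀ x ∈ dom t ∩ dom (G.mul s t),
    act s (act t x) = act (G.mul s t) x

/-- A partial action of the semigroupoid on `X`. -/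
def IsPartialAction (G : Semigroupoid S) (dom : S → Set X) (act : S → X → X) : Prop :=
  P1 G dom act ∧ P2 G dom act

/-- Condition (G1): if `S^s = S^t ≠ ∅` then `ₛX = ₜX`. -/
def G1 (G : Semigroupoid S) (dom : S → Set X) : Prop :=
  ∀ s t : S, G.rightComp s = G.rightComp t → (G.rightComp s).Nonempty → dom s = dom t

/-- Condition (G2): if `(s,t) ∈ S⁽²⁾` then `ₜX = ₛₜX`. -/
def G2 (G : Semigroupoid S) (dom : S → Set X) : Prop :=
  ∀ s t : S, G.comp s t → dom t = dom (G.mul s t)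

/-- A global action of the semigroupoid on `X`. -/
def IsGlobalAction (G : Semigroupoid S) (dom : S → Set X) (act : S → X → X) : Prop :=
  IsPartialAction G dom act ∧ G1 G dom ∧ G2 G dom

/-- A partial action is non-degenerate when `X = ⋃ₛ (ₛX ∪ X_s)`. -/
def Nondegenerate (G : Semigroupoid S) (dom : S → Set X) (act : S → X → X) : Prop :=
  (⋃ s : S, dom s ∪ img dom act s) = Set.univ

section Morphisms

variable {Y : Type w}

/-- A morphism of partial actions `φ : (α,X) → (β,Y)`. -/
def IsMorphism (G : Semigroupoid S) (domX : S → Set X) (actX : S → X → X)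
    (domY : S → Set Y) (actY : S → Y → Y) (φ : X → Y) : Prop :=
  ∀ s : S, (∀ x ∈ domX s, φ x ∈ domY s) ∧ (∀ x ∈ domX s, φ (actX s x) = actY s (φ x))

/-- An embedding of partial actions. -/
def IsEmbedding (G : Semigroupoid S) (domX : S → Set X) (actX : S → X → X)
    (domY : S → Set Y) (actY : S → Y → Y) (φ : X → Y) : Prop :=
  Function.Injective φ ∧ IsMorphism G domX actX domY actY φ ∧
    ∀ s : S, domX s = {x | φ x ∈ domY s ∧ actY s (φ x) ∈ Set.range φ}

end Morphisms

/-- The relation `∼` on `S`: `s ∼ t` iff `s = t`, or `S^s = S^t ≠ ∅`, or `s = ut`. -/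
def simRel (G : Semigroupoid S) (s t : S) : Prop :=
  s = t ∨ (G.rightComp s = G.rightComp t ∧ (G.rightComp s).Nonempty) ∨
    ∃ u : S, G.comp u t ∧ s = G.mul u t

/-- `R`: the smallest equivalence relation containing `∼`. -/
def Rrel (G : Semigroupoid S) : S → S → Prop := Relation.EqvGen (simRel G)

/-- `₍ρₛ₎X = ⋃ ({ₜX : t R s} ∪ {X_t : t ∈ S^s})`. -/
def rhoDom (G : Semigroupoid S) (dom : S → Set X) (act : S → X → X) (s : S) : Set X :=
  {x | (∃ t : S, Rrel G t s ∧ x ∈ dom t) ∨ (∃ t : S, G.comp s t ∧ x ∈ img dom act t)}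

/-- The set `D ⊆ S^δ × X`, where `S^δ = S ∪ {δ}` is encoded as `Option S`
(with `none` playing the role of the extra symbol `δ`). -/
def DSet (G : Semigroupoid S) (dom : S → Set X) (act : S → X → X) : Set (Option S × X) :=
  {p | ∀ s : S, p.1 = some s → p.2 ∈ rhoDom G dom act s}

theorem noneMem (G : Semigroupoid S) (dom : S → Set X) (act : S → X → X) (x : X) :
    ((none : Option S), x) ∈ DSet G dom act := by
  intro s h
  simp at h

/-- Generating relation for `≈`:
(1) `(δ, α_s x) ∼ (s, x)` for `x ∈ ₛX`;
(2) `(tu, x) ∼ (t, α_u x)` for `u ∈ S^t` and `x ∈ ᵤX`. -/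
def preRel (G : Semigroupoid S) (dom : S → Set X) (act : S → X → X) :
    Option S × X → Option S × X → Prop := fun p q =>
  (∃ (s : S) (x : X), x ∈ dom s ∧ p = (none, act s x) ∧ q = (some s, x)) ∨
  (∃ (t u : S) (x : X), G.comp t u ∧ x ∈ dom u ∧
      p = (some (G.mul t u), x) ∧ q = (some t, act u x))

/-- `≈`: the smallest equivalence relation containing the generating relation. -/
def approx (G : Semigroupoid S) (dom : S → Set X) (act : S → X → X) :
    Option S × X → Option S × X → Prop :=
  Relation.EqvGen (preRel G dom act)

/-- The setoid on `D` induced by `≈`. -/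
def DSetoid (G : Semigroupoid S) (dom : S → Set X) (act : S → X → X) :
    Setoid (DSet G dom act) :=
  Setoid.comap Subtype.val (Relation.EqvGen.setoid (preRel G dom act))

/-- `E = D/≈`. -/
def EType (G : Semigroupoid S) (dom : S → Set X) (act : S → X → X) : Type _ :=
  Quotient (DSetoid G dom act)

/-- The class `[a,x] ∈ E` of `(a,x) ∈ D`. -/
def mkE (G : Semigroupoid S) (dom : S → Set X) (act : S → X → X)
    (p : DSet G dom act) : EType G dom act :=
  Quotient.mk (DSetoid G dom act) p

/-- `ₛE = {[a,x] : (a,x) ≈ (t,y) for some t ∈ S^s} ∪ {[δ,x] : x ∈ ₍ρₛ₎X}`. -/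
def domE (G : Semigroupoid S) (dom : S → Set X) (act : S → X → X) (s : S) :
    Set (EType G dom act) :=
  {e | (∃ (p : DSet G dom act) (t : S) (y : X),
          G.comp s t ∧ approx G dom act p.val (some t, y) ∧ e = mkE G dom act p) ∨
       (∃ x : X, x ∈ rhoDom G dom act s ∧
          e = mkE G dom act ⟨(none, x), noneMem G dom act x⟩)}

/-- `δ : X → E`, `x ↦ [δ,x]`. -/
def deltaMap (G : Semigroupoid S) (dom : S → Set X) (act : S → X → X) (x : X) :
    EType G dom act :=
  mkE G dom act ⟨(none, x), noneMem G dom act x⟩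

end Semigroupoid

/-! Every pair `(a, x)` stands for at most one point of `X`: `x` itself if `a = δ`, and `α_s x`
if `a = s` and `x ∈ ₛX`. By (P1) and (P2) this point is an invariant of `≈`. If `(s,x)` and `(t,y)`
stand for the same point `z`, then `(ps,x) ≈ (p,z) ≈ (pt,y)`. If they stand for none, every chain
joining them avoids `δ`, hence uses only generators `(tu,x) ∼ (t,α_u x)`, and by associativity
these preserve the set of left factors and commute with left multiplication. -/

namespace Semigroupoid

variable {S : Type u} {X : Type v} {G : Semigroupoid S} {dom : S → Set X} {act : S → X → X}

theorem comp_mul_iff {p t u : S} (htu : G.comp t u) : G.comp p (G.mul t u) ↔ G.comp p t :=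
  ⟨fun h => (G.assoc p t u (Or.inr (Or.inr ⟨htu, h⟩))).1,
    fun h => (G.assoc p t u (Or.inl ⟨h, htu⟩)).2.2.2.1⟩

theorem P1.mem_dom_mul_iff (hP1 : P1 G dom act) {t u : S} (htu : G.comp t u) {x : X}
    (hx : x ∈ dom u) : x ∈ dom (G.mul t u) ↔ act u x ∈ dom t := by
  have := Set.ext_iff.mp (hP1 t u htu) x
  simp only [Set.mem_ofPred_eq, Set.mem_inter_iff, hx, true_and] at this
  rw [← this]
  exact ⟨And.left, fun h => ⟨h, x, hx, rfl⟩⟩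

variable (dom act) in
open Classical in
noncomputable def value : Option S × X → Option X
  | (none, x) => some x
  | (some s, x) => if x ∈ dom s then some (act s x) else none

theorem value_some_eq_some_iff {s : S} {x z : X} :
    value dom act (some s, x) = some z ↔ x ∈ dom s ∧ act s x = z := by
  by_cases hx : x ∈ dom s <;> simp [value, hx]

theorem value_eq_of_preRel (hα : IsPartialAction G dom act) {a b : Option S × X}
    (h : preRel G dom act a b) : value dom act a = value dom act b := by
  rcases h with ⟨s, x, hx, rfl, rfl⟩ | ⟨t, u, x, htu, hx, rfl, rfl⟩
  · simp [value, hx]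
  · by_cases hy : act u x ∈ dom t
    · have hxtu := (hα.1.mem_dom_mul_iff htu hx).mpr hy
      simp [value, hy, hxtu, hα.2 t u htu x ⟨hx, hxtu⟩]
    · have hxtu := mt (hα.1.mem_dom_mul_iff htu hx).mp hy
      simp [value, hy, hxtu]

theorem value_eq_of_approx (hα : IsPartialAction G dom act) {a b : Option S × X}
    (h : approx G dom act a b) : value dom act a = value dom act b := by
  induction h with
  | rel _ _ h => exact value_eq_of_preRel hα h
  | refl => rfl
  | symm _ _ _ ih => exact ih.symm
  | trans _ _ _ _ _ ih₁ ih₂ => exact ih₁.trans ih₂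

theorem approx_mul_of_mem_dom {s t p : S} {x y : X} (hps : G.comp p s) (hpt : G.comp p t)
    (hx : x ∈ dom s) (hy : y ∈ dom t) (hxy : act s x = act t y) :
    approx G dom act (some (G.mul p s), x) (some (G.mul p t), y) := by
  have hs : approx G dom act (some (G.mul p s), x) (some p, act s x) :=
    .rel _ _ (.inr ⟨p, s, x, hps, hx, rfl, rfl⟩)
  have ht : approx G dom act (some (G.mul p t), y) (some p, act t y) :=
    .rel _ _ (.inr ⟨p, t, y, hpt, hy, rfl, rfl⟩)
  rw [hxy] at hs
  exact hs.trans _ _ _ ht.symm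

theorem approx_mul_of_value_eq_none (hα : IsPartialAction G dom act) {a b : Option S × X}
    (h : approx G dom act a b) (ha : value dom act a = none) :
    ∀ s t, a.1 = some s → b.1 = some t → (∀ p, G.comp p s ↔ G.comp p t) ∧
      ∀ p, G.comp p s → approx G dom act (some (G.mul p s), a.2) (some (G.mul p t), b.2) := by
  induction h with
  | rel a b h =>
    rintro s t' hs ht
    rcases h with ⟨r, x, -, rfl, -⟩ | ⟨t, u, x, htu, hx, rfl, rfl⟩
    · cases hs
    · simp only [Option.some.injEq] at hs ht
      subst hs ht
      refine ⟨fun p => comp_mul_iff htu, fun p hp => ?_⟩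
      obtain ⟨-, -, hptu, -, hassoc⟩ := G.assoc p t u (Or.inr (Or.inr ⟨htu, hp⟩))
      rw [← hassoc]
      exact .rel _ _ (.inr ⟨G.mul p t, u, x, hptu, hx, rfl, rfl⟩)
  | refl =>
    rintro s t hs ht
    rw [hs] at ht
    cases ht
    exact ⟨fun _ => Iff.rfl, fun _ _ => .refl _⟩
  | symm _ _ hab ih =>
    rintro s t hs ht
    obtain ⟨hcomp, hmul⟩ := ih ((value_eq_of_approx hα hab).trans ha) t s ht hs
    exact ⟨fun p => (hcomp p).symm, fun p hp => (hmul p ((hcomp p).mpr hp)).symm⟩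
  | trans _ b _ hab _ ih₁ ih₂ =>
    rintro s t hs ht
    have hb : value dom act b = none := (value_eq_of_approx hα hab).symm.trans ha
    obtain ⟨r, hr⟩ : ∃ r, b.1 = some r := by
      obtain ⟨_ | r, w⟩ := b
      · cases hb
      · exact ⟨r, rfl⟩
    obtain ⟨hcomp₁, hmul₁⟩ := ih₁ ha s r hs hr
    obtain ⟨hcomp₂, hmul₂⟩ := ih₂ hb r t hr ht
    exact ⟨fun p => (hcomp₁ p).trans (hcomp₂ p),
      fun p hp => (hmul₁ p hp).trans _ _ _ (hmul₂ p ((hcomp₁ p).mp hp))⟩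

end Semigroupoid

open Semigroupoid in
theorem statement12_general {S : Type u} {X : Type v} (G : Semigroupoid S)
    (dom : S → Set X) (act : S → X → X) (hα : IsPartialAction G dom act)
    (s t p : S) (x y : X)
    (h : approx G dom act (some s, x) (some t, y))
    (hps : G.comp p s) (hpt : G.comp p t) :
    approx G dom act (some (G.mul p s), x) (some (G.mul p t), y) := by
  have hvalue := value_eq_of_approx hα h
  rcases hx : value dom act (some s, x) with _ | z
  · exact (approx_mul_of_value_eq_none hα h hx s t rfl rfl).2 p hps
  · obtain ⟨hxs, rfl⟩ := value_some_eq_some_iff.mp hx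
    obtain ⟨hyt, hyx⟩ := value_some_eq_some_iff.mp (hvalue ▸ hx)
    exact approx_mul_of_mem_dom hps hpt hxs hyt hyx.symm

open Semigroupoid in
/-- If `(s,x) ≈ (t,y)` and `(p,s), (p,t) ∈ S⁽²⁾`, then `(ps,x) ≈ (pt,y)`. -/
theorem statement12 {S : Type u} {X : Type v} (G : Semigroupoid S)
    (dom : S → Set X) (act : S → X → X) (hα : IsPartialAction G dom act)
    (s t p : S) (x y : X)
    (hDs : ((some s : Option S), x) ∈ DSet G dom act)
    (hDt : ((some t : Option S), y) ∈ DSet G dom act)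
    (h : approx G dom act (some s, x) (some t, y))
    (hps : G.comp p s) (hpt : G.comp p t) :
    approx G dom act (some (G.mul p s), x) (some (G.mul p t), y) :=
  statement12_general G dom act hα s t p x y h hps hpt
end

section
/- Let S be a semigroupoid, (α,X) a partial action of S, and ≈ the equivalence relation on the set D from the universal globalization construction. If (δ,x) ≈ (δ,y), then x = y. -/
universe u v w

/-!
Send `(δ, x)` to `x` and `(s, x)` to `α_s(x)` when `x ∈ ₛX`, and to "undefined" otherwise. This
value is invariant under both generating relations of `≈`: under (1) by construction, and
under (2) because, for `(t, u)` composable and `x ∈ ᵤX`, (P1) says `x ∈ ₜᵤX ↔ α_u(x) ∈ ₜX`,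
and (P2) then gives `α_t(α_u(x)) = α_{tu}(x)`. So it is constant on `≈`-classes, and on
`(δ, x)` it returns `x`.
-/

namespace Semigroupoid

variable {S : Type u} {X : Type v} {G : Semigroupoid S} {dom : S → Set X} {act : S → X → X}

open Classical in
noncomputable def partialEval (dom : S → Set X) (act : S → X → X) : Option S × X → Option X
  | (none, x) => some x
  | (some s, x) => if x ∈ dom s then some (act s x) else none

theorem partialEval_eq_of_preRel (hα : IsPartialAction G dom act) {p q : Option S × X}
    (hpq : preRel G dom act p q) : partialEval dom act p = partialEval dom act q := by
  obtain ⟨hP1, hP2⟩ := hα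
  rcases hpq with ⟨s, x, hx, rfl, rfl⟩ | ⟨t, u, x, htu, hx, rfl, rfl⟩
  · simp [partialEval, hx]
  · by_cases hm : x ∈ dom (G.mul t u)
    · have ht : act u x ∈ dom t := (hP1.mem_dom_mul_iff htu hx).mp hm
      simp [partialEval, hm, ht, hP2 t u htu x ⟨hx, hm⟩]
    · have ht : act u x ∉ dom t := mt (hP1.mem_dom_mul_iff htu hx).mpr hm
      simp [partialEval, hm, ht]

theorem partialEval_eq_of_approx (hα : IsPartialAction G dom act) {p q : Option S × X}
    (hpq : approx G dom act p q) : partialEval dom act p = partialEval dom act q :=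
  Setoid.eqvGen_le (s := Setoid.ker (partialEval dom act))
    (fun _ _ => partialEval_eq_of_preRel hα) hpq

end Semigroupoid

open Semigroupoid in
/-- If `(δ,x) ≈ (δ,y)`, then `x = y`. -/
theorem statement14 {S : Type u} {X : Type v} (G : Semigroupoid S)
    (dom : S → Set X) (act : S → X → X) (hα : IsPartialAction G dom act)
    (x y : X) (h : approx G dom act (none, x) (none, y)) :
    x = y :=
  Option.some_injective X (partialEval_eq_of_approx hα h)
end

section
/- Let S be a semigroupoid and (α,X) a partial action of S. Let E = D/≈ with equivalence classes [a,x], for each s ∈ S let ₛE = {[a,x] : (a,x) ≈ (t,y) for some t ∈ S^s} ∪ {[δ,x] : x ∈ ₍ρₛ₎X}, and define β_s : ₛE → E by β_s([t,y]) = [st,y] when (t,y) ∈ D with t ∈ S^s, and β_s([δ,x]) = [s,x] when x ∈ ₍ρₛ₎X. Then the pair (β,E) = ((ₛE)_{s∈S},(β_s)_{s∈S}) is a well-defined global action of S on E. -/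
universe u v w

/-! `β_s` is induced by a map on representatives that sends `(δ,x)` to `(s,x)` and `(t,y)`
with `t ∈ S^s` to `(st,y)`. The work lies in making it respect the two generating moves of
`≈`; for the move `(tu,x) ∼ (t,α_u x)` with `t ∉ S^s` this is exactly what (P1) and (P2)
provide. Every element of `ₛE` has a representative `(t,y)` with `t ∈ S^s` or `(δ,x)` with
`x ∈ ₍ρₛ₎X`, and on these the action axioms reduce to Exel associativity. Finally `ₛE` only
depends on `S^s` and the `R`-class of `s`, which gives (G1) and (G2). -/

namespace Semigroupoid

variable {S : Type u} {X : Type v}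

section Composability

variable (G : Semigroupoid S) {s t u : S}

theorem comp_mul_right_iff (htu : G.comp t u) : G.comp s (G.mul t u) ↔ G.comp s t :=
  ⟨fun h => (G.assoc s t u (.inr (.inr ⟨htu, h⟩))).1,
    fun h => (G.assoc s t u (.inl ⟨h, htu⟩)).2.2.2.1⟩

theorem comp_mul_left_iff (hst : G.comp s t) : G.comp (G.mul s t) u ↔ G.comp t u :=
  ⟨fun h => (G.assoc s t u (.inr (.inl ⟨hst, h⟩))).2.1,
    fun h => (G.assoc s t u (.inl ⟨hst, h⟩)).2.2.1⟩

theorem mul_assoc_of_comp (hst : G.comp s t) (htu : G.comp t u) :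
    G.mul (G.mul s t) u = G.mul s (G.mul t u) :=
  (G.assoc s t u (.inl ⟨hst, htu⟩)).2.2.2.2

theorem rightComp_mul (hst : G.comp s t) : G.rightComp (G.mul s t) = G.rightComp t :=
  Set.ext fun _ => G.comp_mul_left_iff hst

theorem rrel_mul (hst : G.comp s t) : Rrel G (G.mul s t) t :=
  .rel _ _ (.inr (.inr ⟨s, hst, rfl⟩))

theorem rrel_of_rightComp_eq (h : G.rightComp s = G.rightComp t)
    (hne : (G.rightComp s).Nonempty) : Rrel G s t :=
  .rel _ _ (.inr (.inl ⟨h, hne⟩))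

end Composability

variable {G : Semigroupoid S} {dom : S → Set X} {act : S → X → X} {s t : S}

theorem rhoDom_congr (hR : Rrel G s t) (hc : G.rightComp s = G.rightComp t) :
    rhoDom G dom act s = rhoDom G dom act t := by
  have hcomp : ∀ v, G.comp s v ↔ G.comp t v := fun v => Set.ext_iff.1 hc v
  have hrel : ∀ r, Rrel G r s ↔ Rrel G r t := fun r =>
    ⟨fun h => .trans _ _ _ h hR, fun h => .trans _ _ _ h (.symm _ _ hR)⟩
  ext x
  simp only [rhoDom, Set.mem_ofPred_eq, hcomp, hrel]

theorem rhoDom_mul (hst : G.comp s t) :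
    rhoDom G dom act (G.mul s t) = rhoDom G dom act t :=
  rhoDom_congr (G.rrel_mul hst) (G.rightComp_mul hst)

theorem domE_congr (hR : Rrel G s t) (hc : G.rightComp s = G.rightComp t) :
    domE G dom act s = domE G dom act t := by
  have hcomp : ∀ v, G.comp s v ↔ G.comp t v := fun v => Set.ext_iff.1 hc v
  ext e
  simp only [domE, Set.mem_ofPred_eq, hcomp, rhoDom_congr hR hc]

theorem domE_mul (hst : G.comp s t) : domE G dom act (G.mul s t) = domE G dom act t :=
  domE_congr (G.rrel_mul hst) (G.rightComp_mul hst)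

theorem some_mem_DSet_iff {y : X} :
    ((some t : Option S), y) ∈ DSet G dom act ↔ y ∈ rhoDom G dom act t :=
  ⟨fun h => h t rfl, fun h _ hs => Option.some.inj hs ▸ h⟩

theorem some_mul_mem_DSet (hst : G.comp s t) {y : X}
    (hD : ((some t : Option S), y) ∈ DSet G dom act) :
    ((some (G.mul s t) : Option S), y) ∈ DSet G dom act :=
  some_mem_DSet_iff.2 (rhoDom_mul hst ▸ some_mem_DSet_iff.1 hD)

theorem mem_DSet_of_preRel {p q : Option S × X} (h : preRel G dom act p q) :
    p ∈ DSet G dom act ∧ q ∈ DSet G dom act := by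
  rcases h with ⟨u, x, hx, rfl, rfl⟩ | ⟨t, u, x, htu, hx, rfl, rfl⟩
  · exact ⟨noneMem G dom act _, some_mem_DSet_iff.2 (.inl ⟨u, .refl _, hx⟩)⟩
  · exact ⟨some_mem_DSet_iff.2 (.inl ⟨u, .symm _ _ (G.rrel_mul htu), hx⟩),
      some_mem_DSet_iff.2 (.inr ⟨u, htu, x, hx, rfl⟩)⟩

theorem approx_mem_DSet_iff {p q : Option S × X} (h : approx G dom act p q) :
    p ∈ DSet G dom act ↔ q ∈ DSet G dom act :=
  (Setoid.eqvGen_le (s := Setoid.ker (· ∈ DSet G dom act))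
    (fun _ _ hpq => propext ⟨fun _ => (mem_DSet_of_preRel hpq).2,
      fun _ => (mem_DSet_of_preRel hpq).1⟩) h).to_iff

variable (G dom act) in
open Classical in
/-- `β_s` on representatives. Off `S^s`, `(t,y)` is first traded for `(δ, α_t y)` when
`y ∈ ₜX`; this keeps the map compatible with `≈` also outside `D` and `ₛE`. -/
noncomputable def translate (s : S) : Option S × X → Option S × X
  | (none, x) => (some s, x)
  | (some t, y) =>
    if G.comp s t then (some (G.mul s t), y)
    else if y ∈ dom t then (some s, act t y) else (some t, y)

theorem translate_some_of_comp (hst : G.comp s t) (y : X) :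
    translate G dom act s (some t, y) = (some (G.mul s t), y) := by
  simp [translate, hst]

theorem translate_some_of_mem (hst : ¬ G.comp s t) {y : X} (hy : y ∈ dom t) :
    translate G dom act s (some t, y) = (some s, act t y) := by
  simp [translate, hst, hy]

theorem translate_some_of_not_mem (hst : ¬ G.comp s t) {y : X} (hy : y ∉ dom t) :
    translate G dom act s (some t, y) = (some t, y) := by
  simp [translate, hst, hy]

theorem approx_translate_of_preRel (hα : IsPartialAction G dom act) (s : S)
    {p q : Option S × X} (h : preRel G dom act p q) :
    approx G dom act (translate G dom act s p) (translate G dom act s q) := by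
  rcases h with ⟨u, x, hx, rfl, rfl⟩ | ⟨t, u, x, htu, hx, rfl, rfl⟩
  · by_cases hsu : G.comp s u
    · rw [translate_some_of_comp hsu]
      exact .symm _ _ (.rel _ _ (.inr ⟨s, u, x, hsu, hx, rfl, rfl⟩))
    · rw [translate_some_of_mem hsu hx]
      exact .refl _
  by_cases hst : G.comp s t
  · rw [translate_some_of_comp ((G.comp_mul_right_iff htu).2 hst), translate_some_of_comp hst,
      ← G.mul_assoc_of_comp hst htu]
    exact .rel _ _ (.inr ⟨_, u, x, (G.comp_mul_left_iff hst).2 htu, hx, rfl, rfl⟩)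
  have hstu : ¬ G.comp s (G.mul t u) := fun h => hst ((G.comp_mul_right_iff htu).1 h)
  have hP1 := Set.ext_iff.1 (hα.1 t u htu) x
  by_cases hxd : x ∈ dom (G.mul t u)
  · have hux : act u x ∈ dom t := ((hP1.2 ⟨hx, hxd⟩).2).1
    rw [translate_some_of_mem hstu hxd, translate_some_of_mem hst hux, hα.2 t u htu x ⟨hx, hxd⟩]
    exact .refl _
  · have hux : act u x ∉ dom t := fun h => hxd (hP1.1 ⟨hx, h, x, hx, rfl⟩).2
    rw [translate_some_of_not_mem hstu hxd, translate_some_of_not_mem hst hux]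
    exact .rel _ _ (.inr ⟨t, u, x, htu, hx, rfl, rfl⟩)

theorem approx_translate (hα : IsPartialAction G dom act) (s : S) {p q : Option S × X}
    (h : approx G dom act p q) :
    approx G dom act (translate G dom act s p) (translate G dom act s q) :=
  Setoid.eqvGen_le (s := (Relation.EqvGen.setoid (preRel G dom act)).comap (translate G dom act s))
    (fun _ _ => approx_translate_of_preRel hα s) h

variable (G dom act) in
open Classical in
/-- The `else` branch is a placeholder: on representatives of `ₛE`, `translate` stays in `D`. -/
noncomputable def betaRep (s : S) (p : DSet G dom act) : EType G dom act :=
  if h : translate G dom act s p.1 ∈ DSet G dom act then mkE G dom act ⟨_, h⟩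
  else mkE G dom act p

theorem betaRep_congr (hα : IsPartialAction G dom act) (s : S) (p q : DSet G dom act)
    (h : DSetoid G dom act p q) : betaRep G dom act s p = betaRep G dom act s q := by
  have hT := approx_translate hα s h
  unfold betaRep
  by_cases hp : translate G dom act s p.1 ∈ DSet G dom act
  · rw [dif_pos hp, dif_pos ((approx_mem_DSet_iff hT).1 hp)]
    exact Quotient.sound hT
  · rw [dif_neg hp, dif_neg (mt (approx_mem_DSet_iff hT).2 hp)]
    exact Quotient.sound h

noncomputable def betaE (hα : IsPartialAction G dom act) (s : S) :
    EType G dom act → EType G dom act :=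
  Quotient.lift (betaRep G dom act s) (betaRep_congr hα s)

theorem betaE_mkE (hα : IsPartialAction G dom act) {p : DSet G dom act} {q : Option S × X}
    (hq : q ∈ DSet G dom act) (hpq : translate G dom act s p.1 = q) :
    betaE hα s (mkE G dom act p) = mkE G dom act ⟨q, hq⟩ := by
  subst hpq
  exact dif_pos hq

theorem betaE_mkE_some (hα : IsPartialAction G dom act) (hst : G.comp s t) {y : X}
    (hD : ((some t : Option S), y) ∈ DSet G dom act) :
    betaE hα s (mkE G dom act ⟨(some t, y), hD⟩) =
      mkE G dom act ⟨(some (G.mul s t), y), some_mul_mem_DSet hst hD⟩ :=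
  betaE_mkE hα _ (translate_some_of_comp hst y)

theorem betaE_deltaMap (hα : IsPartialAction G dom act) {x : X}
    (hx : x ∈ rhoDom G dom act s) :
    betaE hα s (deltaMap G dom act x) = mkE G dom act ⟨(some s, x), some_mem_DSet_iff.2 hx⟩ :=
  betaE_mkE hα _ rfl

theorem mkE_some_mem_domE (hst : G.comp s t) {y : X}
    (hD : ((some t : Option S), y) ∈ DSet G dom act) :
    mkE G dom act ⟨(some t, y), hD⟩ ∈ domE G dom act s :=
  .inl ⟨⟨(some t, y), hD⟩, t, y, hst, .refl _, rfl⟩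

theorem domE_induction {P : EType G dom act → Prop}
    (some_rep : ∀ t y (hD : ((some t : Option S), y) ∈ DSet G dom act), G.comp s t →
      P (mkE G dom act ⟨(some t, y), hD⟩))
    (delta_rep : ∀ x ∈ rhoDom G dom act s, P (deltaMap G dom act x)) :
    ∀ e ∈ domE G dom act s, P e := by
  rintro _ (⟨p, t, y, hst, hpt, rfl⟩ | ⟨x, hx, rfl⟩)
  · have hD := (approx_mem_DSet_iff hpt).1 p.2
    rw [show mkE G dom act p = mkE G dom act ⟨_, hD⟩ from Quotient.sound hpt]
    exact some_rep t y hD hst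
  · exact delta_rep x hx

theorem betaE_mem_domE (hα : IsPartialAction G dom act) (hst : G.comp s t) :
    ∀ e ∈ domE G dom act t, betaE hα t e ∈ domE G dom act s :=
  domE_induction
    (fun u y hD htu => by
      rw [betaE_mkE_some hα htu]
      exact mkE_some_mem_domE ((G.comp_mul_right_iff htu).2 hst) _)
    (fun x hx => by
      rw [betaE_deltaMap hα hx]
      exact mkE_some_mem_domE hst _)

theorem betaE_betaE (hα : IsPartialAction G dom act) (hst : G.comp s t) :
    ∀ e ∈ domE G dom act t, betaE hα s (betaE hα t e) = betaE hα (G.mul s t) e :=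
  domE_induction
    (fun u y hD htu => by
      rw [betaE_mkE_some hα htu, betaE_mkE_some hα ((G.comp_mul_right_iff htu).2 hst),
        betaE_mkE_some hα ((G.comp_mul_left_iff hst).2 htu)]
      simp only [G.mul_assoc_of_comp hst htu])
    (fun x hx => by
      rw [betaE_deltaMap hα hx, betaE_mkE_some hα hst,
        betaE_deltaMap hα ((rhoDom_mul hst).symm ▸ hx)])

theorem isGlobalAction_betaE (hα : IsPartialAction G dom act) :
    IsGlobalAction G (domE G dom act) (betaE hα) := by
  refine ⟨⟨fun s t hst => ?_, fun s t hst e he => betaE_betaE hα hst e he.1⟩,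
    fun s t h hne => domE_congr (G.rrel_of_rightComp_eq h hne) h,
    fun s t hst => (domE_mul hst).symm⟩
  rw [domE_mul hst, Set.inter_self]
  ext e
  exact ⟨And.left, fun he => ⟨he, betaE_mem_domE hα hst e he, e, he, rfl⟩⟩

end Semigroupoid

open Semigroupoid in
/-- There is a well-defined family of maps `β_s : ₛE → E` with `β_s([t,y]) = [st,y]`
for `t ∈ S^s` and `β_s([δ,x]) = [s,x]` for `x ∈ ₍ρₛ₎X`, and `(β,E)` is a global action
of `S` on `E = D/≈`. -/
theorem statement15 {S : Type u} {X : Type v} (G : Semigroupoid S)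
    (dom : S → Set X) (act : S → X → X) (hα : IsPartialAction G dom act) :
    ∃ βE : S → EType G dom act → EType G dom act,
      (∀ (s t : S) (y : X), G.comp s t →
        ∀ hD : ((some t : Option S), y) ∈ DSet G dom act,
          ∃ hD' : ((some (G.mul s t) : Option S), y) ∈ DSet G dom act,
            βE s (mkE G dom act ⟨(some t, y), hD⟩) =
              mkE G dom act ⟨(some (G.mul s t), y), hD'⟩) ∧
      (∀ (s : S) (x : X), x ∈ rhoDom G dom act s →
        ∃ hD' : ((some s : Option S), x) ∈ DSet G dom act,
          βE s (deltaMap G dom act x) = mkE G dom act ⟨(some s, x), hD'⟩) ∧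
      IsGlobalAction G (domE G dom act) βE :=
  ⟨betaE hα, fun _ _ _ hst hD => ⟨_, betaE_mkE_some hα hst hD⟩,
    fun _ _ hx => ⟨_, betaE_deltaMap hα hx⟩, isGlobalAction_betaE hα⟩
end

section
/- Let S be a semigroupoid, (α,X) a partial action of S, and (δ,β,E) its universal globalization constructed via E = D/≈ with δ(x) = [δ,x]. Write X₁ = ⋃_{s∈S}(ₛX ∪ X_s), X₀ = X \ X₁, E₁ = ⋃_{s∈S}(ₛE ∪ E_s), and E₀ = E \ E₁. Then δ(X₀) = E₀. Consequently, (α,X) is non-degenerate (i.e. X₀ = ∅) if and only if (β,E) is non-degenerate (i.e. E₀ = ∅). -/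
universe u v w

/-!
A point `x` lying in no `ₛX` and no `X_s` is touched by neither generator of `≈` in the
form `(δ, x)`, so the class `δ(x)` is the singleton `{(δ, x)}`. Every element of `ₛE` or `E_s`,
on the other hand, is either `δ(x')` with `x' ∈ ₍ρₛ₎X ⊆ X₁` or has a representative `(t, y)`
labelled by some `t ∈ S`; hence `δ(X₀) ⊆ E₀`. Conversely `[s, x] = β_s(δ(x))`, `δ(α_s y) = [s, y]`
and `δ(x) ∈ ₛE` for `x ∈ ₛX`, so every element of `E₀` is `δ(x)` for some `x ∈ X₀`.
-/

namespace Semigroupoid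

variable {S : Type u} {X : Type v} (G : Semigroupoid S) (dom : S → Set X) (act : S → X → X)

/-- The classes in `E` having a representative `(t, y)` with `t ∈ S` rather than `δ`. -/
def labelledClasses : Set (EType G dom act) :=
  {e | ∃ (t : S) (y : X) (h : ((some t : Option S), y) ∈ DSet G dom act),
    e = mkE G dom act ⟨(some t, y), h⟩}

variable {G dom act}

lemma mem_rhoDom_of_mem_dom {s : S} {x : X} (hx : x ∈ dom s) : x ∈ rhoDom G dom act s :=
  Or.inl ⟨s, Relation.EqvGen.refl s, hx⟩

lemma mem_iUnion_of_mem_rhoDom {s : S} {x : X} (hx : x ∈ rhoDom G dom act s) :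
    x ∈ ⋃ s : S, dom s ∪ img dom act s := by
  rcases hx with ⟨t, -, hx⟩ | ⟨t, -, hx⟩
  · exact Set.mem_iUnion.mpr ⟨t, Or.inl hx⟩
  · exact Set.mem_iUnion.mpr ⟨t, Or.inr hx⟩

lemma preRel_mem_DSet {a b : Option S × X} (h : preRel G dom act a b) :
    a ∈ DSet G dom act ∧ b ∈ DSet G dom act := by
  rcases h with ⟨s, x, hx, rfl, rfl⟩ | ⟨t, u, x, htu, hx, rfl, rfl⟩
  · refine ⟨noneMem G dom act _, ?_⟩
    rintro s' ⟨⟩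
    exact mem_rhoDom_of_mem_dom hx
  · constructor
    · rintro s' ⟨⟩
      have hut : simRel G (G.mul t u) u := Or.inr (Or.inr ⟨t, htu, rfl⟩)
      exact Or.inl ⟨u, Relation.EqvGen.symm _ _ (Relation.EqvGen.rel _ _ hut), hx⟩
    · rintro s' ⟨⟩
      exact Or.inr ⟨u, htu, x, hx, rfl⟩

lemma approx.mem_DSet_iff {a b : Option S × X} (h : approx G dom act a b) :
    a ∈ DSet G dom act ↔ b ∈ DSet G dom act := by
  induction h with
  | rel a b h => exact iff_of_true (preRel_mem_DSet h).1 (preRel_mem_DSet h).2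
  | refl a => exact Iff.rfl
  | symm a b _ ih => exact ih.symm
  | trans a b c _ _ ih₁ ih₂ => exact ih₁.trans ih₂

lemma approx.eq_none_iff {x : X} (hx : ∀ s : S, x ∉ img dom act s)
    {a b : Option S × X} (h : approx G dom act a b) :
    a = ((none : Option S), x) ↔ b = ((none : Option S), x) := by
  induction h with
  | rel a b h =>
    rcases h with ⟨s, y, hy, rfl, rfl⟩ | ⟨t, u, y, -, -, rfl, rfl⟩
    · exact iff_of_false (fun he => hx s ⟨y, hy, congrArg Prod.snd he⟩) (by simp)
    · simp
  | refl a => exact Iff.rfl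
  | symm a b _ ih => exact ih.symm
  | trans a b c _ _ ih₁ ih₂ => exact ih₁.trans ih₂

lemma deltaMap_eq_mkE_iff {x : X} (hx : ∀ s : S, x ∉ img dom act s) {p : DSet G dom act} :
    deltaMap G dom act x = mkE G dom act p ↔ p.val = ((none : Option S), x) := by
  constructor
  · intro h
    exact (approx.eq_none_iff hx (Quotient.exact h)).mp rfl
  · intro h
    exact congrArg (mkE G dom act) (Subtype.ext h.symm)

lemma deltaMap_notMem_labelledClasses {x : X} (hx : ∀ s : S, x ∉ img dom act s) :
    deltaMap G dom act x ∉ labelledClasses G dom act := by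
  rintro ⟨t, y, h, he⟩
  simpa using (deltaMap_eq_mkE_iff hx).mp he

lemma deltaMap_act {s : S} {y : X} (hy : y ∈ dom s)
    (h : ((some s : Option S), y) ∈ DSet G dom act) :
    deltaMap G dom act (act s y) = mkE G dom act ⟨(some s, y), h⟩ :=
  Quotient.sound (Relation.EqvGen.rel _ _ (Or.inl ⟨s, y, hy, rfl, rfl⟩))

lemma deltaMap_mem_domE {s : S} {x : X} (hx : x ∈ rhoDom G dom act s) :
    deltaMap G dom act x ∈ domE G dom act s :=
  Or.inr ⟨x, hx, rfl⟩

lemma mem_domE_cases {s : S} {e : EType G dom act} (he : e ∈ domE G dom act s) :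
    e ∈ labelledClasses G dom act ∨
      ∃ x ∈ rhoDom G dom act s, e = deltaMap G dom act x := by
  rcases he with ⟨p, t, y, -, hpy, rfl⟩ | ⟨x, hx, rfl⟩
  · have hD : ((some t : Option S), y) ∈ DSet G dom act := hpy.mem_DSet_iff.mp p.2
    exact Or.inl ⟨t, y, hD, Quotient.sound hpy⟩
  · exact Or.inr ⟨x, hx, rfl⟩

section Globalization

variable {βE : S → EType G dom act → EType G dom act}

/-- `β_s [t, y] = [st, y]` for `t ∈ S^s`. -/
def MapsLabelledByMul (βE : S → EType G dom act → EType G dom act) : Prop :=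
  ∀ (s t : S) (y : X), G.comp s t →
    ∀ hD : ((some t : Option S), y) ∈ DSet G dom act,
      ∃ hD' : ((some (G.mul s t) : Option S), y) ∈ DSet G dom act,
        βE s (mkE G dom act ⟨(some t, y), hD⟩) = mkE G dom act ⟨(some (G.mul s t), y), hD'⟩

/-- `β_s [δ, x] = [s, x]` for `x ∈ ₍ρₛ₎X`. -/
def MapsDeltaToLabel (βE : S → EType G dom act → EType G dom act) : Prop :=
  ∀ (s : S) (x : X), x ∈ rhoDom G dom act s →
    ∃ hD' : ((some s : Option S), x) ∈ DSet G dom act,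
      βE s (deltaMap G dom act x) = mkE G dom act ⟨(some s, x), hD'⟩

lemma mkE_some_mem_img (hβ : MapsDeltaToLabel βE) {s : S} {x : X}
    (h : ((some s : Option S), x) ∈ DSet G dom act) :
    mkE G dom act ⟨(some s, x), h⟩ ∈ img (domE G dom act) βE s := by
  obtain ⟨_, hβx⟩ := hβ s x (h s rfl)
  exact ⟨_, deltaMap_mem_domE (h s rfl), hβx⟩

lemma img_domE_subset_labelledClasses (hβt : MapsLabelledByMul βE) (hβ : MapsDeltaToLabel βE)
    (s : S) : img (domE G dom act) βE s ⊆ labelledClasses G dom act := by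
  rintro _ ⟨e, he, rfl⟩
  rcases he with ⟨p, t, y, hst, hpy, rfl⟩ | ⟨x, hx, rfl⟩
  · have hD : ((some t : Option S), y) ∈ DSet G dom act := hpy.mem_DSet_iff.mp p.2
    obtain ⟨hD', hβy⟩ := hβt s t y hst hD
    have hp : mkE G dom act p = mkE G dom act ⟨_, hD⟩ := Quotient.sound hpy
    exact ⟨_, y, hD', hp ▸ hβy⟩
  · obtain ⟨hD', hβx⟩ := hβ s x hx
    exact ⟨s, x, hD', hβx⟩

lemma deltaMap_notMem_iUnion (hβt : MapsLabelledByMul βE) (hβ : MapsDeltaToLabel βE) {x : X}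
    (hx : x ∉ ⋃ s : S, dom s ∪ img dom act s) :
    deltaMap G dom act x ∉ ⋃ s : S, domE G dom act s ∪ img (domE G dom act) βE s := by
  have hx_img : ∀ s, x ∉ img dom act s := fun s hs => hx (Set.mem_iUnion.mpr ⟨s, Or.inr hs⟩)
  simp only [Set.mem_iUnion, Set.mem_union, not_exists, not_or]
  refine fun s => ⟨fun hdom => ?_, fun himg => deltaMap_notMem_labelledClasses hx_img
    (img_domE_subset_labelledClasses hβt hβ s himg)⟩
  rcases mem_domE_cases hdom with hl | ⟨x', hx', he⟩
  · exact deltaMap_notMem_labelledClasses hx_img hl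
  · obtain rfl : x' = x := by simpa using (deltaMap_eq_mkE_iff hx_img).mp he
    exact hx (mem_iUnion_of_mem_rhoDom hx')

lemma mem_image_deltaMap_of_notMem_iUnion (hβ : MapsDeltaToLabel βE) {e : EType G dom act}
    (he : e ∉ ⋃ s : S, domE G dom act s ∪ img (domE G dom act) βE s) :
    ∃ x ∉ ⋃ s : S, dom s ∪ img dom act s, deltaMap G dom act x = e := by
  simp only [Set.mem_iUnion, Set.mem_union, not_exists, not_or] at he
  obtain ⟨⟨o, x⟩, hp⟩ := e
  cases o with
  | some s => exact absurd (mkE_some_mem_img hβ hp) (he s).2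
  | none =>
    refine ⟨x, ?_, rfl⟩
    simp only [Set.mem_iUnion, Set.mem_union, not_exists, not_or]
    refine fun s => ⟨fun hx => (he s).1 (deltaMap_mem_domE (mem_rhoDom_of_mem_dom hx)), ?_⟩
    rintro ⟨y, hy, rfl⟩
    have hD : ((some s : Option S), y) ∈ DSet G dom act := by
      rintro _ ⟨⟩
      exact mem_rhoDom_of_mem_dom hy
    have hδ : deltaMap G dom act (act s y) ∈ img (domE G dom act) βE s := by
      rw [deltaMap_act hy hD]
      exact mkE_some_mem_img hβ hD
    exact (he s).2 hδ

theorem image_deltaMap_compl_iUnion (hβt : MapsLabelledByMul βE) (hβ : MapsDeltaToLabel βE) :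
    deltaMap G dom act '' (Set.univ \ ⋃ s : S, dom s ∪ img dom act s) =
      Set.univ \ ⋃ s : S, domE G dom act s ∪ img (domE G dom act) βE s := by
  ext e
  constructor
  · rintro ⟨x, ⟨-, hx⟩, rfl⟩
    exact ⟨trivial, deltaMap_notMem_iUnion hβt hβ hx⟩
  · rintro ⟨-, he⟩
    obtain ⟨x, hx, rfl⟩ := mem_image_deltaMap_of_notMem_iUnion hβ he
    exact ⟨x, ⟨trivial, hx⟩, rfl⟩

end Globalization

end Semigroupoid

open Semigroupoid in
theorem statement17_general {S : Type u} {X : Type v} (G : Semigroupoid S)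
    (dom : S → Set X) (act : S → X → X)
    (βE : S → EType G dom act → EType G dom act)
    (hspec1 : ∀ (s t : S) (y : X), G.comp s t →
      ∀ hD : ((some t : Option S), y) ∈ DSet G dom act,
        ∃ hD' : ((some (G.mul s t) : Option S), y) ∈ DSet G dom act,
          βE s (mkE G dom act ⟨(some t, y), hD⟩) =
            mkE G dom act ⟨(some (G.mul s t), y), hD'⟩)
    (hspec2 : ∀ (s : S) (x : X), x ∈ rhoDom G dom act s →
      ∃ hD' : ((some s : Option S), x) ∈ DSet G dom act,
        βE s (deltaMap G dom act x) = mkE G dom act ⟨(some s, x), hD'⟩) :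
    deltaMap G dom act '' (Set.univ \ ⋃ s : S, dom s ∪ img dom act s) =
      Set.univ \ ⋃ s : S, domE G dom act s ∪ img (domE G dom act) βE s ∧
    ((Set.univ \ ⋃ s : S, dom s ∪ img dom act s) = ∅ ↔
      (Set.univ \ ⋃ s : S, domE G dom act s ∪ img (domE G dom act) βE s) = ∅) := by
  have hδ := image_deltaMap_compl_iUnion (βE := βE) hspec1 hspec2
  exact ⟨hδ, by rw [← hδ, Set.image_eq_empty]⟩

open Semigroupoid in
/-- With `X₁ = ⋃ₛ(ₛX ∪ X_s)`, `X₀ = X \ X₁`, `E₁ = ⋃ₛ(ₛE ∪ E_s)`, `E₀ = E \ E₁`, one has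
`δ(X₀) = E₀`; consequently `(α,X)` is non-degenerate iff `(β,E)` is non-degenerate. -/
theorem statement17 {S : Type u} {X : Type v} (G : Semigroupoid S)
    (dom : S → Set X) (act : S → X → X) (hα : IsPartialAction G dom act)
    (βE : S → EType G dom act → EType G dom act)
    (hspec1 : ∀ (s t : S) (y : X), G.comp s t →
      ∀ hD : ((some t : Option S), y) ∈ DSet G dom act,
        ∃ hD' : ((some (G.mul s t) : Option S), y) ∈ DSet G dom act,
          βE s (mkE G dom act ⟨(some t, y), hD⟩) =
            mkE G dom act ⟨(some (G.mul s t), y), hD'⟩)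
    (hspec2 : ∀ (s : S) (x : X), x ∈ rhoDom G dom act s →
      ∃ hD' : ((some s : Option S), x) ∈ DSet G dom act,
        βE s (deltaMap G dom act x) = mkE G dom act ⟨(some s, x), hD'⟩)
    (hglob : IsGlobalAction G (domE G dom act) βE) :
    deltaMap G dom act '' (Set.univ \ ⋃ s : S, dom s ∪ img dom act s) =
      Set.univ \ ⋃ s : S, domE G dom act s ∪ img (domE G dom act) βE s ∧
    ((Set.univ \ ⋃ s : S, dom s ∪ img dom act s) = ∅ ↔
      (Set.univ \ ⋃ s : S, domE G dom act s ∪ img (domE G dom act) βE s) = ∅) :=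
  statement17_general G dom act βE hspec1 hspec2
end

section
/- Let S be a semigroup, regarded as a semigroupoid with S⁽²⁾ = S × S, and let (α,X) be a partial (semigroupoid) action of S on X. Then (α,X) satisfies ₛX = X for every s ∈ S (i.e. it is a strong global semigroup action in the sense of Kudryavtseva and Laan) if and only if (α,X) is a non-degenerate global semigroupoid action of S on X. -/
universe u v w

namespace Semigroupoid

variable {S : Type u} {X : Type v} {G : Semigroupoid S} {dom : S → Set X} {act : S → X → X}

theorem G1.dom_eq_of_forall_comp (hG1 : G1 G dom) [Nonempty S] (hS : ∀ s t : S, G.comp s t)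
    (s t : S) : dom s = dom t := by
  have hcomp : ∀ r, G.rightComp r = Set.univ := fun r => Set.eq_univ_of_forall (hS r)
  exact hG1 s t (by rw [hcomp, hcomp]) (by rw [hcomp]; exact Set.univ_nonempty)

theorem P1.img_subset_dom (hP1 : P1 G dom act) {s t : S} (hst : G.comp s t)
    (hdom : dom t ⊆ dom (G.mul s t)) : img dom act t ⊆ dom s := by
  rintro _ ⟨y, hy, rfl⟩
  have hy' : y ∈ dom t ∩ dom (G.mul s t) := ⟨hy, hdom hy⟩
  rw [← hP1 s t hst] at hy'
  exact hy'.2.1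

theorem isGlobalAction_of_dom_eq_univ (hα : IsPartialAction G dom act)
    (h : ∀ s, dom s = Set.univ) : IsGlobalAction G dom act :=
  ⟨hα, fun s t _ _ => by rw [h s, h t], fun s t _ => by rw [h t, h (G.mul s t)]⟩

theorem nondegenerate_of_dom_eq_univ [Nonempty S] (h : ∀ s, dom s = Set.univ) :
    Nondegenerate G dom act :=
  Set.eq_univ_of_forall fun x =>
    Set.mem_iUnion.2 ⟨Classical.arbitrary S, Or.inl (by simp [h])⟩

theorem dom_eq_univ_of_nondegenerate [Nonempty S] (hS : ∀ s t : S, G.comp s t)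
    (hP1 : P1 G dom act) (hG1 : G1 G dom) (hnd : Nondegenerate G dom act) (s : S) :
    dom s = Set.univ := by
  have hdom := hG1.dom_eq_of_forall_comp hS
  refine Set.eq_univ_of_forall fun x => ?_
  have hx : x ∈ ⋃ t, dom t ∪ img dom act t := hnd ▸ Set.mem_univ x
  obtain ⟨t, ht⟩ := Set.mem_iUnion.1 hx
  rcases ht with hxt | hxt
  · exact hdom t s ▸ hxt
  · exact hP1.img_subset_dom (hS s t) (hdom t _).subset hxt

end Semigroupoid

open Semigroupoid in
/-- For a semigroup `S` (a nonempty semigroupoid with `S⁽²⁾ = S × S`) and a partial action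
`(α,X)` of `S`: `(α,X)` satisfies `ₛX = X` for every `s` (i.e. is a strong global semigroup
action in the sense of Kudryavtseva and Laan) iff `(α,X)` is a non-degenerate global
semigroupoid action. -/
theorem statement19 {S : Type u} {X : Type v} (G : Semigroupoid S) [Nonempty S]
    (hS : ∀ s t : S, G.comp s t)
    (dom : S → Set X) (act : S → X → X) (hα : IsPartialAction G dom act) :
    (∀ s : S, dom s = Set.univ) ↔
      (IsGlobalAction G dom act ∧ Nondegenerate G dom act) :=
  ⟨fun h => ⟨isGlobalAction_of_dom_eq_univ hα h, nondegenerate_of_dom_eq_univ h⟩,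
    fun ⟨⟨_, hG1, _⟩, hnd⟩ => dom_eq_univ_of_nondegenerate hS hα.1 hG1 hnd⟩
end
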